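/- Suppose bounded operators U, V on H satisfy the orthogonality relations U U† + V V† = I = U† U + Vᵀ V̄ and U Vᵀ + V Uᵀ = 0 = U† V + Vᵀ Ū, V is Hilbert–Schmidt, and U is invertible. Then the operator X := V Ū⁻¹ satisfies X = −(U†)⁻¹ Vᵀ, X is Hilbert–Schmidt and skew symmetric (Xᵀ = −X); moreover X is invariant under right multiplication by unitaries: for every unitary operator S on H, (V S̄) (Ū S̄)⁻¹ = V Ū⁻¹, where Ū S̄ is the conjugate of the invertible operator U S. -/

import Mathlib

open scoped InnerProductSpace
open ContinuousLinearMap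

variable {H : Type*} [NormedAddCommGroup H] [InnerProductSpace ℂ H] [CompleteSpace H]

/-- `V` is a Hilbert–Schmidt operator: `∑ᵢ ‖V eᵢ‖² < ∞` for some Hilbert basis `(eᵢ)`. -/
def IsHilbertSchmidt (V : H →L[ℂ] H) : Prop :=
  ∃ (ι : Type) (e : HilbertBasis ι ℂ H), Summable fun i => ‖V (e i)‖ ^ 2

/-!
Conjugation `A ↦ Ā` is a multiplicative involution commuting with `†`, so `Ū` is invertible with
`U`, and transposition `Aᵀ = (A†)‾` reverses products, commutes with inverses and sends `Ū` to
`U†`. Solving `U† V + Vᵀ Ū = 0` for `V Ū⁻¹` gives `X = −(U†)⁻¹ Vᵀ`, whence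
`Xᵀ = (Ū⁻¹)ᵀ Vᵀ = (U†)⁻¹ Vᵀ = −X`. The Hilbert–Schmidt class is closed under adjoints (swap the
order of summation in `∑ᵢ ∑ⱼ |⟪fⱼ, A eᵢ⟫|²`) and under bounded multiplication on either side.
Invariance under unitaries is `(V S̄)(Ū S̄)⁻¹ = V S̄ S̄⁻¹ Ū⁻¹`.
-/

open scoped Ring

theorem map_ringInverse {M N F : Type*} [MonoidWithZero M] [MonoidWithZero N] [EquivLike F M N]
    [MulEquivClass F M N] (f : F) (a : M) : f a⁻¹ʳ = (f a)⁻¹ʳ := by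
  by_cases ha : IsUnit a
  · calc f a⁻¹ʳ = (f a)⁻¹ʳ * (f a * f a⁻¹ʳ) := (Ring.inverse_mul_cancel_left _ _ (ha.map f)).symm
      _ = (f a)⁻¹ʳ := by rw [← map_mul, Ring.mul_inverse_cancel a ha, map_one, mul_one]
  · rw [Ring.inverse_non_unit a ha, map_zero,
      Ring.inverse_non_unit _ (mt (isUnit_map_iff f a).mp ha)]

theorem Ring.mul_inverse_eq_neg_inverse_mul_of_mul_add_mul_eq_zero {R : Type*} [Ring R]
    {a b c d : R} (ha : IsUnit a) (hd : IsUnit d) (h : a * b + c * d = 0) :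
    b * d⁻¹ʳ = -(a⁻¹ʳ * c) :=
  calc b * d⁻¹ʳ = a⁻¹ʳ * (a * b) * d⁻¹ʳ := by rw [Ring.inverse_mul_cancel_left a b ha]
    _ = -(a⁻¹ʳ * c) := by
      rw [eq_neg_of_add_eq_zero_left h, mul_neg, neg_mul, ← mul_assoc,
        Ring.mul_inverse_cancel_right _ _ hd]

theorem Ring.mul_mul_inverse_mul_cancel {M : Type*} [MonoidWithZero M] {s : M} (hs : IsUnit s)
    (a b : M) : a * s * (b * s)⁻¹ʳ = a * b⁻¹ʳ := by
  rw [Ring.inverse_mul (Or.inr hs), mul_assoc, Ring.mul_inverse_cancel_left _ _ hs]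

theorem HilbertBasis.hasSum_norm_inner_sq {ι 𝕜 E : Type*} [RCLike 𝕜] [NormedAddCommGroup E]
    [InnerProductSpace 𝕜 E] (b : HilbertBasis ι 𝕜 E) (x : E) :
    HasSum (fun i => ‖⟪b i, x⟫_𝕜‖ ^ 2) (‖x‖ ^ 2) := by
  simpa [HilbertBasis.repr_apply_apply] using lp.hasSum_norm (p := 2) (by norm_num) (b.repr x)

theorem HilbertBasis.summable_norm_adjoint_apply_sq {ι κ 𝕜 E F : Type*} [RCLike 𝕜]
    [NormedAddCommGroup E] [InnerProductSpace 𝕜 E] [CompleteSpace E]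
    [NormedAddCommGroup F] [InnerProductSpace 𝕜 F] [CompleteSpace F]
    (b : HilbertBasis ι 𝕜 E) (b' : HilbertBasis κ 𝕜 F) {A : E →L[𝕜] F}
    (hA : Summable fun i => ‖A (b i)‖ ^ 2) :
    Summable fun j => ‖adjoint A (b' j)‖ ^ 2 := by
  have hrows : Summable fun p : ι × κ => ‖⟪b' p.2, A (b p.1)⟫_𝕜‖ ^ 2 := by
    refine (summable_prod_of_nonneg (fun p => by positivity)).mpr ⟨fun i => ?_, ?_⟩
    · exact (b'.hasSum_norm_inner_sq (A (b i))).summable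
    · simpa only [fun i => (b'.hasSum_norm_inner_sq (A (b i))).tsum_eq] using hA
  have hcols : Summable fun p : κ × ι => ‖⟪b p.2, adjoint A (b' p.1)⟫_𝕜‖ ^ 2 := by
    have hentry (i : ι) (j : κ) : ‖⟪b' j, A (b i)⟫_𝕜‖ = ‖⟪b i, adjoint A (b' j)⟫_𝕜‖ := by
      rw [← adjoint_inner_left, ← inner_conj_symm, RCLike.norm_conj]
    simpa only [hentry, Function.comp_def, Equiv.prodComm_apply, Prod.fst_swap, Prod.snd_swap]
      using (Equiv.prodComm κ ι).summable_iff.mpr hrows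
  have hcol_sums := ((summable_prod_of_nonneg (fun p => by positivity)).mp hcols).2
  simpa only [fun j => (b.hasSum_norm_inner_sq (adjoint A (b' j))).tsum_eq] using hcol_sums

theorem IsHilbertSchmidt.adjoint {A : H →L[ℂ] H} (hA : IsHilbertSchmidt A) :
    IsHilbertSchmidt (adjoint A) := by
  obtain ⟨ι, b, hb⟩ := hA
  exact ⟨ι, b, b.summable_norm_adjoint_apply_sq b hb⟩

theorem IsHilbertSchmidt.comp_left {E : Type*} [NormedAddCommGroup E] [InnerProductSpace ℂ E]
    {A : E →L[ℂ] E} (hA : IsHilbertSchmidt A) (B : E →L[ℂ] E) : IsHilbertSchmidt (B ∘L A) := by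
  obtain ⟨ι, b, hb⟩ := hA
  refine ⟨ι, b, (hb.mul_left (‖B‖ ^ 2)).of_nonneg_of_le (fun i => by positivity) fun i => ?_⟩
  rw [← mul_pow]
  exact pow_le_pow_left₀ (norm_nonneg _) (B.le_opNorm _) 2

theorem IsHilbertSchmidt.comp_right {A : H →L[ℂ] H} (hA : IsHilbertSchmidt A) (B : H →L[ℂ] H) :
    IsHilbertSchmidt (A ∘L B) := by
  simpa only [adjoint_comp, adjoint_adjoint] using
    (hA.adjoint.comp_left (ContinuousLinearMap.adjoint B)).adjoint

structure IsAntiunitaryInvolution {E : Type*} [NormedAddCommGroup E] [InnerProductSpace ℂ E]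
    (J : E → E) : Prop where
  map_add : ∀ f g, J (f + g) = J f + J g
  map_smul : ∀ (c : ℂ) (f : E), J (c • f) = (starRingEnd ℂ) c • J f
  involutive : ∀ f, J (J f) = f
  inner_map_map : ∀ f g : E, ⟪J f, J g⟫_ℂ = ⟪g, f⟫_ℂ

namespace IsAntiunitaryInvolution

variable {E : Type*} [NormedAddCommGroup E] [InnerProductSpace ℂ E] {J : E → E}

theorem norm_map (hJ : IsAntiunitaryInvolution J) (f : E) : ‖J f‖ = ‖f‖ := by
  rw [norm_eq_sqrt_re_inner (𝕜 := ℂ), norm_eq_sqrt_re_inner (𝕜 := ℂ) f, hJ.inner_map_map]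

noncomputable def toLinearIsometryEquiv (hJ : IsAntiunitaryInvolution J) : E ≃ₗᵢ⋆[ℂ] E where
  toFun := J
  invFun := J
  map_add' := hJ.map_add
  map_smul' := hJ.map_smul
  left_inv := hJ.involutive
  right_inv := hJ.involutive
  norm_map' := hJ.norm_map

/-- The conjugate operator `Ā = J A J`. -/
noncomputable def conjOp (hJ : IsAntiunitaryInvolution J) : (E →L[ℂ] E) ≃* (E →L[ℂ] E) :=
  let Jc : E →L⋆[ℂ] E := hJ.toLinearIsometryEquiv.toContinuousLinearEquiv
  { toFun := fun A => Jc.comp (A.comp Jc)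
    invFun := fun A => Jc.comp (A.comp Jc)
    left_inv := fun A => by ext f; simp [Jc, toLinearIsometryEquiv, hJ.involutive]
    right_inv := fun A => by ext f; simp [Jc, toLinearIsometryEquiv, hJ.involutive]
    map_mul' := fun A B => by ext f; simp [Jc, toLinearIsometryEquiv, hJ.involutive] }

@[simp] theorem conjOp_apply (hJ : IsAntiunitaryInvolution J) (A : E →L[ℂ] E) (f : E) :
    hJ.conjOp A f = J (A (J f)) := rfl

@[simp] theorem conjOp_conjOp (hJ : IsAntiunitaryInvolution J) (A : E →L[ℂ] E) :
    hJ.conjOp (hJ.conjOp A) = A := by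
  ext f
  simp [hJ.involutive]

variable [CompleteSpace E]

theorem adjoint_conjOp (hJ : IsAntiunitaryInvolution J) (A : E →L[ℂ] E) :
    adjoint (hJ.conjOp A) = hJ.conjOp (adjoint A) := by
  refine ((eq_adjoint_iff _ _).mpr fun x y => ?_).symm
  calc ⟪J (adjoint A (J x)), y⟫_ℂ = ⟪J (adjoint A (J x)), J (J y)⟫_ℂ := by rw [hJ.involutive]
    _ = ⟪A (J y), J x⟫_ℂ := by rw [hJ.inner_map_map, adjoint_inner_right]
    _ = ⟪x, J (A (J y))⟫_ℂ := by rw [← hJ.inner_map_map, hJ.involutive]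

noncomputable def transpose (hJ : IsAntiunitaryInvolution J) (A : E →L[ℂ] E) : E →L[ℂ] E :=
  hJ.conjOp (adjoint A)

theorem transpose_mul (hJ : IsAntiunitaryInvolution J) (A B : E →L[ℂ] E) :
    hJ.transpose (A * B) = hJ.transpose B * hJ.transpose A := by
  simp only [transpose, ← star_eq_adjoint, star_mul, map_mul]

theorem transpose_ringInverse (hJ : IsAntiunitaryInvolution J) (A : E →L[ℂ] E) :
    hJ.transpose A⁻¹ʳ = (hJ.transpose A)⁻¹ʳ := by
  simp only [transpose, ← star_eq_adjoint, ← Ring.inverse_star, map_ringInverse]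

theorem transpose_conjOp (hJ : IsAntiunitaryInvolution J) (A : E →L[ℂ] E) :
    hJ.transpose (hJ.conjOp A) = adjoint A := by
  rw [transpose, adjoint_conjOp, conjOp_conjOp]

end IsAntiunitaryInvolution

theorem X_skew_and_invariant_general
    -- the antiunitary involution `f ↦ f* = J f`
    (J : H → H)
    (hJ_add : ∀ f g, J (f + g) = J f + J g)
    (hJ_smul : ∀ (c : ℂ) (f : H), J (c • f) = (starRingEnd ℂ) c • J f)
    (hJ_invol : ∀ f, J (J f) = f)
    (hJ_inner : ∀ f g : H, ⟪J f, J g⟫_ℂ = ⟪g, f⟫_ℂ)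
    (U V Ubar Vt : H →L[ℂ] H)
    (hUbar : ∀ f, Ubar f = J (U (J f)))
    (hVt : ∀ f, Vt f = J (adjoint V (J f)))
    -- the orthogonality relations
    (h4 : adjoint U ∘L V + Vt ∘L Ubar = 0)
    (hV : IsHilbertSchmidt V)
    -- `U` is invertible
    (hU : IsUnit U)
    -- the transpose of `X = V Ū⁻¹`
    (Xt : H →L[ℂ] H)
    (hXt : ∀ f, Xt f = J (adjoint (V ∘L Ring.inverse Ubar) (J f))) :
    V ∘L Ring.inverse Ubar = -(Ring.inverse (adjoint U) ∘L Vt) ∧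
    IsHilbertSchmidt (V ∘L Ring.inverse Ubar) ∧
    Xt = -(V ∘L Ring.inverse Ubar) ∧
    (∀ S Sbar : H →L[ℂ] H, adjoint S ∘L S = 1 → S ∘L adjoint S = 1 →
      (∀ f, Sbar f = J (S (J f))) →
      (V ∘L Sbar) ∘L Ring.inverse (Ubar ∘L Sbar) = V ∘L Ring.inverse Ubar) := by
  have hJ : IsAntiunitaryInvolution J := ⟨hJ_add, hJ_smul, hJ_invol, hJ_inner⟩
  have hUbar_eq : Ubar = hJ.conjOp U := ext hUbar
  have hVt_eq : Vt = hJ.transpose V := ext hVt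
  have hUbar_unit : IsUnit Ubar := hUbar_eq ▸ hU.map hJ.conjOp
  have hX : V * Ubar⁻¹ʳ = -((adjoint U)⁻¹ʳ * Vt) :=
    Ring.mul_inverse_eq_neg_inverse_mul_of_mul_add_mul_eq_zero hU.star hUbar_unit h4
  refine ⟨hX, hV.comp_right _, ?_, fun S Sbar hS hS' hSbar => ?_⟩
  · calc Xt = hJ.transpose (V * Ubar⁻¹ʳ) := ext hXt
      _ = (adjoint U)⁻¹ʳ * Vt := by
        rw [hJ.transpose_mul, hJ.transpose_ringInverse, hUbar_eq, hJ.transpose_conjOp, hVt_eq]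
      _ = -(V ∘L Ubar⁻¹ʳ) := (neg_eq_iff_eq_neg.mpr hX).symm
  · have hS_unit : IsUnit S := ⟨⟨S, adjoint S, hS', hS⟩, rfl⟩
    have hSbar_eq : Sbar = hJ.conjOp S := ext hSbar
    exact Ring.mul_mul_inverse_mul_cancel (hSbar_eq ▸ hS_unit.map hJ.conjOp) V Ubar

/-- For an orthogonal pair `(U,V)` with `V` Hilbert–Schmidt and `U`
invertible, `X := V Ū⁻¹` satisfies `X = −(U†)⁻¹ Vᵀ`, is Hilbert–Schmidt and skew
symmetric (`Xᵀ = −X`), and is invariant under right multiplication by unitaries: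
`(V S̄)(Ū S̄)⁻¹ = V Ū⁻¹` for every unitary `S`. -/
theorem X_skew_and_invariant
    [TopologicalSpace.SeparableSpace H]
    -- the antiunitary involution `f ↦ f* = J f`
    (J : H → H)
    (hJ_add : ∀ f g, J (f + g) = J f + J g)
    (hJ_smul : ∀ (c : ℂ) (f : H), J (c • f) = (starRingEnd ℂ) c • J f)
    (hJ_invol : ∀ f, J (J f) = f)
    (hJ_inner : ∀ f g : H, ⟪J f, J g⟫_ℂ = ⟪g, f⟫_ℂ)
    (U V Ubar Vbar Ut Vt : H →L[ℂ] H)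
    (hUbar : ∀ f, Ubar f = J (U (J f)))
    (hVbar : ∀ f, Vbar f = J (V (J f)))
    (hUt : ∀ f, Ut f = J (adjoint U (J f)))
    (hVt : ∀ f, Vt f = J (adjoint V (J f)))
    -- the orthogonality relations
    (h1 : U ∘L adjoint U + V ∘L adjoint V = 1)
    (h2 : adjoint U ∘L U + Vt ∘L Vbar = 1)
    (h3 : U ∘L Vt + V ∘L Ut = 0)
    (h4 : adjoint U ∘L V + Vt ∘L Ubar = 0)
    (hV : IsHilbertSchmidt V)
    -- `U` is invertible
    (hU : IsUnit U)
    -- the transpose of `X = V Ū⁻¹`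
    (Xt : H →L[ℂ] H)
    (hXt : ∀ f, Xt f = J (adjoint (V ∘L Ring.inverse Ubar) (J f))) :
    V ∘L Ring.inverse Ubar = -(Ring.inverse (adjoint U) ∘L Vt) ∧
    IsHilbertSchmidt (V ∘L Ring.inverse Ubar) ∧
    Xt = -(V ∘L Ring.inverse Ubar) ∧
    (∀ S Sbar : H →L[ℂ] H, adjoint S ∘L S = 1 → S ∘L adjoint S = 1 →
      (∀ f, Sbar f = J (S (J f))) →
      (V ∘L Sbar) ∘L Ring.inverse (Ubar ∘L Sbar) = V ∘L Ring.inverse Ubar) :=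
  X_skew_and_invariant_general J hJ_add hJ_smul hJ_invol hJ_inner U V Ubar Vt hUbar hVt h4 hV hU Xt
    hXt
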